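/- Let F_q be a finite field, k and m positive integers, F^1, …, F^m full flags on F_q^{2k} with F^j = (F^j_1, …, F^j_{2k−1}), and T a subgroup of GL(2k, q). Suppose that: the subspaces F^1_k, …, F^m_k lie in pairwise different orbits of the action of T; any two distinct subspaces in the union ⋃_{j=1}^m Orb_T(F^j_k) intersect trivially; and Stab_T(F^j_k) ⊆ Stab_T(F^j_i) for all i ∈ {1, …, 2k−1} and all j ∈ {1, …, m}. Then the orbits Orb_T(F^1), …, Orb_T(F^m) are pairwise disjoint, their union C = ⋃_{j=1}^m Orb_T(F^j) has cardinality Σ_{j=1}^m |Orb_T(F^j_k)|, and any two distinct flags in C have flag distance exactly 2k² (so C is an optimum distance full flag code). -/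

import Mathlib

/-!
Each flag of `Orb_T(F^j)` is determined by its middle subspace, because the stabilizer of
`F^j_k` fixes the whole flag; this makes `Orb_T(F^j) → Orb_T(F^j_k)` a bijection and separates
distinct codewords by their middle subspaces. Two distinct middles are trivially intersecting
`k`-subspaces of a `2k`-space, hence complementary. Below the middle the flags then meet
trivially, above it they span the space, so the `i`-th subspaces are at distance
`2 min(i, 2k - i)`, and these distances add up to `2k²`.
-/

open Module

/-- The action of `A ∈ GL(n, F)` on subspaces of `F^n`: `U · A` is the image of `U`
under the invertible linear map given by the matrix `A`. -/
noncomputable def mapGL {F : Type*} [Field F] {n : ℕ}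
    (A : GL (Fin n) F) (U : Submodule F (Fin n → F)) : Submodule F (Fin n → F) :=
  U.map (Matrix.toLin' (A : Matrix (Fin n) (Fin n) F))

/-- The subspace distance `d_S(U, W) = dim U + dim W − 2 dim(U ∩ W)`. -/
noncomputable def subspaceDist {F V : Type*} [Field F] [AddCommGroup V] [Module F V]
    (U W : Submodule F V) : ℕ :=
  finrank F U + finrank F W - 2 * finrank F ↥(U ⊓ W)

/-- The orbit flag code of a full flag `Fl` (indexed so that `Fl i` has dimension `i` for
`1 ≤ i ≤ 2k−1`) under a subgroup `T ≤ GL(2k, q)`, recorded as a set of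
`(2k−1)`-tuples of subspaces. -/
noncomputable def orbFlag {F : Type*} [Field F] [Fintype F] {k : ℕ}
    (T : Subgroup (GL (Fin (2 * k)) F)) (Fl : ℕ → Submodule F (Fin (2 * k) → F)) :
    Set (Fin (2 * k - 1) → Submodule F (Fin (2 * k) → F)) :=
  {G | ∃ A ∈ T, G = fun j => mapGL A (Fl (j.val + 1))}

section Flags

variable {K V : Type*} [Field K] [AddCommGroup V] [Module K V]

/-- A full flag of an `n`-dimensional space, indexed by `1, …, n - 1`. -/
structure IsFullFlag (n : ℕ) (G : ℕ → Submodule K V) : Prop where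
  finrank_eq : ∀ i, 0 < i → i < n → finrank K (G i) = i
  le : ∀ i i', 0 < i → i ≤ i' → i' < n → G i ≤ G i'

lemma subspaceDist_of_disjoint {U W : Submodule K V} (h : Disjoint U W) :
    subspaceDist U W = finrank K U + finrank K W := by
  rw [subspaceDist, h.eq_bot, finrank_bot, mul_zero, Nat.sub_zero]

lemma subspaceDist_of_codisjoint [FiniteDimensional K V] {U W : Submodule K V}
    (h : Codisjoint U W) :
    subspaceDist U W = 2 * finrank K V - (finrank K U + finrank K W) := by
  have := Submodule.finrank_sup_add_finrank_inf_eq U W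
  rw [h.eq_top, finrank_top] at this
  unfold subspaceDist
  omega

lemma IsFullFlag.subspaceDist_eq [FiniteDimensional K V] {k : ℕ} (hV : finrank K V = 2 * k)
    {G G' : ℕ → Submodule K V} (hG : IsFullFlag (2 * k) G) (hG' : IsFullFlag (2 * k) G')
    (hmid : Disjoint (G k) (G' k)) {i : ℕ} (hi₀ : 0 < i) (hi : i < 2 * k) :
    subspaceDist (G i) (G' i) = 2 * min i (2 * k - i) := by
  rcases le_total i k with hik | hki
  · rw [subspaceDist_of_disjoint (hmid.mono (hG.le i k hi₀ hik (by omega))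
      (hG'.le i k hi₀ hik (by omega)))]
    rw [hG.finrank_eq i hi₀ hi, hG'.finrank_eq i hi₀ hi]
    omega
  · have hk : 0 < k := by omega
    have hcompl : IsCompl (G k) (G' k) := by
      refine (Submodule.isCompl_iff_disjoint _ _ ?_).2 hmid
      rw [hV, hG.finrank_eq k hk (by omega), hG'.finrank_eq k hk (by omega)]
      omega
    rw [subspaceDist_of_codisjoint (hcompl.codisjoint.mono (hG.le k i hk hki hi)
      (hG'.le k i hk hki hi)), hV]
    rw [hG.finrank_eq i hi₀ hi, hG'.finrank_eq i hi₀ hi]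
    omega

lemma sum_range_min_sub (k : ℕ) : ∑ i ∈ Finset.range (2 * k), min i (2 * k - i) = k ^ 2 := by
  rw [two_mul, Finset.sum_range_add, ← Finset.sum_add_distrib,
    Finset.sum_congr rfl (g := fun _ => k) fun x hx => by
      have := Finset.mem_range.1 hx
      omega]
  simp [sq]

theorem IsFullFlag.sum_subspaceDist_eq [FiniteDimensional K V] {k : ℕ} (hk : 0 < k)
    (hV : finrank K V = 2 * k) {G G' : ℕ → Submodule K V} (hG : IsFullFlag (2 * k) G)
    (hG' : IsFullFlag (2 * k) G') (hmid : Disjoint (G k) (G' k)) :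
    ∑ i : Fin (2 * k - 1), subspaceDist (G (i + 1)) (G' (i + 1)) = 2 * k ^ 2 := by
  have hshift := Finset.sum_range_succ' (fun i => 2 * min i (2 * k - i)) (2 * k - 1)
  rw [Nat.sub_add_cancel (by omega)] at hshift
  calc ∑ i : Fin (2 * k - 1), subspaceDist (G (i + 1)) (G' (i + 1))
      = ∑ i ∈ Finset.range (2 * k - 1), 2 * min (i + 1) (2 * k - (i + 1)) := by
        rw [Fin.sum_univ_eq_sum_range (fun i => subspaceDist (G (i + 1)) (G' (i + 1)))]
        exact Finset.sum_congr rfl fun i hi =>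
          hG.subspaceDist_eq hV hG' hmid i.succ_pos (by have := Finset.mem_range.1 hi; omega)
    _ = ∑ i ∈ Finset.range (2 * k), 2 * min i (2 * k - i) := by simp [hshift]
    _ = 2 * k ^ 2 := by rw [← Finset.mul_sum, sum_range_min_sub]

end Flags

section GeneralLinearGroup

variable {F : Type*} [Field F] {n : ℕ}

lemma mapGL_one (U : Submodule F (Fin n → F)) : mapGL 1 U = U := by
  simp [mapGL]

lemma mapGL_mapGL (A B : GL (Fin n) F) (U : Submodule F (Fin n → F)) :
    mapGL A (mapGL B U) = mapGL (A * B) U := by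
  simp only [mapGL, Units.val_mul, Matrix.toLin'_mul, Submodule.map_comp]

lemma finrank_mapGL (A : GL (Fin n) F) (U : Submodule F (Fin n → F)) :
    finrank F (mapGL A U) = finrank F U :=
  (Submodule.equivMapOfInjective _ (Matrix.mulVec_injective_iff_isUnit.2 A.isUnit)
    U).finrank_eq.symm

lemma mapGL_inv_mul_of_mapGL_eq {A B : GL (Fin n) F} {U W : Submodule F (Fin n → F)}
    (h : mapGL A U = mapGL B W) : mapGL (B⁻¹ * A) U = W := by
  rw [← mapGL_mapGL, h, mapGL_mapGL, inv_mul_cancel, mapGL_one]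

lemma IsFullFlag.mapGL {G : ℕ → Submodule F (Fin n → F)} {l : ℕ} (hG : IsFullFlag l G)
    (A : GL (Fin n) F) : IsFullFlag l fun i => mapGL A (G i) where
  finrank_eq i hi₀ hi := by rw [finrank_mapGL, hG.finrank_eq i hi₀ hi]
  le i i' hi₀ hii' hi' := Submodule.map_mono (hG.le i i' hi₀ hii' hi')

variable {T : Subgroup (GL (Fin n) F)} {A B : GL (Fin n) F} {U W : Submodule F (Fin n → F)}

lemma mapGL_eq_mapGL_of_stabilizer_le (hstab : ∀ C ∈ T, mapGL C U = U → mapGL C W = W)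
    (hA : A ∈ T) (hB : B ∈ T) (h : mapGL A U = mapGL B U) : mapGL A W = mapGL B W := by
  rw [← mul_inv_cancel_left B A, ← mapGL_mapGL,
    hstab _ (mul_mem (inv_mem hB) hA) (mapGL_inv_mul_of_mapGL_eq h)]

lemma mapGL_ne_mapGL_of_notMem_orbit (horb : ∀ C ∈ T, mapGL C U ≠ W) (hA : A ∈ T)
    (hB : B ∈ T) : mapGL A U ≠ mapGL B W := fun h =>
  horb _ (mul_mem (inv_mem hB) hA) (mapGL_inv_mul_of_mapGL_eq h)

end GeneralLinearGroup

section OrbitFlagCode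

variable {F : Type*} [Field F] {k : ℕ} {Fl : ℕ → Submodule F (Fin (2 * k) → F)}

def middleIndex (hk : 0 < k) : Fin (2 * k - 1) := ⟨k - 1, by omega⟩

lemma apply_middleIndex (hk : 0 < k) (A : GL (Fin (2 * k)) F) :
    (fun i : Fin (2 * k - 1) => mapGL A (Fl (i + 1))) (middleIndex hk) = mapGL A (Fl k) := by
  simp [middleIndex, Nat.sub_add_cancel hk]

variable [Fintype F] {T : Subgroup (GL (Fin (2 * k)) F)}

lemma image_middleIndex_orbFlag (hk : 0 < k) :
    (· (middleIndex hk)) '' orbFlag T Fl = {U | ∃ A ∈ T, U = mapGL A (Fl k)} := by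
  ext U
  constructor
  · rintro ⟨_, ⟨A, hA, rfl⟩, rfl⟩
    exact ⟨A, hA, apply_middleIndex hk A⟩
  · rintro ⟨A, hA, rfl⟩
    exact ⟨_, ⟨A, hA, rfl⟩, apply_middleIndex hk A⟩

lemma injOn_middleIndex_orbFlag (hk : 0 < k)
    (hstab : ∀ A ∈ T, mapGL A (Fl k) = Fl k →
      ∀ i, 1 ≤ i → i ≤ 2 * k - 1 → mapGL A (Fl i) = Fl i) :
    Set.InjOn (· (middleIndex hk)) (orbFlag T Fl) := by
  rintro _ ⟨A, hA, rfl⟩ _ ⟨B, hB, rfl⟩ h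
  simp only [apply_middleIndex] at h
  funext i
  exact mapGL_eq_mapGL_of_stabilizer_le (fun C hC hCk => hstab C hC hCk _ (by omega)
    (by omega)) hA hB h

lemma middleIndex_ne_of_mem_orbFlag (hk : 0 < k) {Fl' : ℕ → Submodule F (Fin (2 * k) → F)}
    (horb : ∀ A ∈ T, mapGL A (Fl k) ≠ Fl' k) {G G'} (hG : G ∈ orbFlag T Fl)
    (hG' : G' ∈ orbFlag T Fl') : G (middleIndex hk) ≠ G' (middleIndex hk) := by
  obtain ⟨⟨A, hA, rfl⟩, ⟨B, hB, rfl⟩⟩ := And.intro hG hG'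
  rw [apply_middleIndex, apply_middleIndex]
  exact mapGL_ne_mapGL_of_notMem_orbit horb hA hB

end OrbitFlagCode

theorem union_orbit_flag_codes_optimum_distance_general
    {F : Type*} [Field F] [Fintype F] {k m : ℕ} (hk : 0 < k)
    (Fl : Fin m → ℕ → Submodule F (Fin (2 * k) → F))
    (hdim : ∀ j i, 1 ≤ i → i ≤ 2 * k - 1 → finrank F (Fl j i) = i)
    (hmono : ∀ j i i', 1 ≤ i → i < i' → i' ≤ 2 * k - 1 → Fl j i < Fl j i')
    (T : Subgroup (GL (Fin (2 * k)) F))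
    (horb : ∀ j j' : Fin m, j ≠ j' → ∀ A ∈ T, mapGL A (Fl j k) ≠ Fl j' k)
    (hmax : ∀ j j' : Fin m, ∀ A ∈ T, ∀ B ∈ T,
      mapGL A (Fl j k) ≠ mapGL B (Fl j' k) → mapGL A (Fl j k) ⊓ mapGL B (Fl j' k) = ⊥)
    (hstab : ∀ j : Fin m, ∀ A ∈ T, mapGL A (Fl j k) = Fl j k →
      ∀ i, 1 ≤ i → i ≤ 2 * k - 1 → mapGL A (Fl j i) = Fl j i) :
    (∀ j j' : Fin m, j ≠ j' → Disjoint (orbFlag T (Fl j)) (orbFlag T (Fl j')))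
    ∧ (⋃ j : Fin m, orbFlag T (Fl j)).ncard
        = ∑ j : Fin m, {U : Submodule F (Fin (2 * k) → F) | ∃ A ∈ T, U = mapGL A (Fl j k)}.ncard
    ∧ (∀ G ∈ ⋃ j : Fin m, orbFlag T (Fl j), ∀ G' ∈ ⋃ j : Fin m, orbFlag T (Fl j),
        G ≠ G' → ∑ i : Fin (2 * k - 1), subspaceDist (G i) (G' i) = 2 * k ^ 2) := by
  have hflag (j : Fin m) : IsFullFlag (2 * k) (Fl j) :=
    ⟨fun i hi₀ hi => hdim j i hi₀ (by omega), fun i i' hi₀ hii' hi' =>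
      hii'.eq_or_lt.elim (fun h => h ▸ le_rfl) fun h => (hmono j i i' hi₀ h (by omega)).le⟩
  have hdisj (j j' : Fin m) (hjj' : j ≠ j') : Disjoint (orbFlag T (Fl j)) (orbFlag T (Fl j')) :=
    Set.disjoint_left.2 fun G hG hG' => middleIndex_ne_of_mem_orbFlag hk (horb j j' hjj') hG hG' rfl
  refine ⟨hdisj, ?_, ?_⟩
  · rw [Set.ncard_iUnion_of_finite (fun _ => Set.toFinite _) fun j j' => hdisj j j',
      finsum_eq_sum_of_fintype]
    refine Finset.sum_congr rfl fun j _ => ?_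
    rw [← image_middleIndex_orbFlag hk, (injOn_middleIndex_orbFlag hk (hstab j)).ncard_image]
  · simp only [Set.mem_iUnion]
    rintro G ⟨j, hG⟩ G' ⟨j', hG'⟩ hne
    have hmid : G (middleIndex hk) ≠ G' (middleIndex hk) := by
      rcases eq_or_ne j j' with rfl | hjj'
      · exact fun h => hne (injOn_middleIndex_orbFlag hk (hstab j) hG hG' h)
      · exact middleIndex_ne_of_mem_orbFlag hk (horb j j' hjj') hG hG'
    obtain ⟨⟨A, hA, rfl⟩, ⟨B, hB, rfl⟩⟩ := And.intro hG hG'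
    rw [apply_middleIndex, apply_middleIndex] at hmid
    exact IsFullFlag.sum_subspaceDist_eq (G := fun i => mapGL A (Fl j i))
      (G' := fun i => mapGL B (Fl j' i)) hk (finrank_fin_fun F) ((hflag j).mapGL A)
      ((hflag j').mapGL B) (disjoint_iff.2 (hmax j j' A hA B hB hmid))

/-- Let `F^1, …, F^m` be full flags on `F_q^{2k}` and `T ≤ GL(2k, q)` such
that the middle subspaces `F^j_k` lie in pairwise different `T`-orbits, any two distinct
subspaces in `⋃_j Orb_T(F^j_k)` intersect trivially, and `Stab_T(F^j_k) ⊆ Stab_T(F^j_i)` for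
all `i, j`. Then the orbit flag codes `Orb_T(F^j)` are pairwise disjoint, their union has
cardinality `Σ_j |Orb_T(F^j_k)|`, and any two distinct flags in the union are at flag
distance exactly `2k²`. -/
theorem union_orbit_flag_codes_optimum_distance
    {F : Type*} [Field F] [Fintype F] {k m : ℕ} (hk : 0 < k) (hm : 0 < m)
    (Fl : Fin m → ℕ → Submodule F (Fin (2 * k) → F))
    (hdim : ∀ j i, 1 ≤ i → i ≤ 2 * k - 1 → finrank F (Fl j i) = i)
    (hmono : ∀ j i i', 1 ≤ i → i < i' → i' ≤ 2 * k - 1 → Fl j i < Fl j i')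
    (T : Subgroup (GL (Fin (2 * k)) F))
    (horb : ∀ j j' : Fin m, j ≠ j' → ∀ A ∈ T, mapGL A (Fl j k) ≠ Fl j' k)
    (hmax : ∀ j j' : Fin m, ∀ A ∈ T, ∀ B ∈ T,
      mapGL A (Fl j k) ≠ mapGL B (Fl j' k) → mapGL A (Fl j k) ⊓ mapGL B (Fl j' k) = ⊥)
    (hstab : ∀ j : Fin m, ∀ A ∈ T, mapGL A (Fl j k) = Fl j k →
      ∀ i, 1 ≤ i → i ≤ 2 * k - 1 → mapGL A (Fl j i) = Fl j i) :
    (∀ j j' : Fin m, j ≠ j' → Disjoint (orbFlag T (Fl j)) (orbFlag T (Fl j')))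
    ∧ (⋃ j : Fin m, orbFlag T (Fl j)).ncard
        = ∑ j : Fin m, {U : Submodule F (Fin (2 * k) → F) | ∃ A ∈ T, U = mapGL A (Fl j k)}.ncard
    ∧ (∀ G ∈ ⋃ j : Fin m, orbFlag T (Fl j), ∀ G' ∈ ⋃ j : Fin m, orbFlag T (Fl j),
        G ≠ G' → ∑ i : Fin (2 * k - 1), subspaceDist (G i) (G' i) = 2 * k ^ 2) :=
  union_orbit_flag_codes_optimum_distance_general hk Fl hdim hmono T horb hmax hstab
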